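/- For n ≥ 7, 2n − 2 ≤ λ₂(Σ_n, C_n) ≤ 4n − 6, where C_n is the set of adjacent transpositions in Σ_n. -/

import Mathlib

/-- The word length of `g` with respect to a generating set `S`. -/
noncomputable def wordLen {G : Type*} [Group G] (S : Set G) (g : G) : ℕ :=
  sInf {k | ∃ l : List G, (∀ x ∈ l, x ∈ S) ∧ l.length = k ∧ l.prod = g}

/-- `λ₂(G,S) = max_{g ∈ G, s, s' ∈ S} l_S(g⁻¹ s s' g)`. -/
noncomputable def lam2 {G : Type*} [Group G] (S : Set G) : ℕ :=
  sSup {m | ∃ g : G, ∃ s ∈ S, ∃ s' ∈ S, m = wordLen S (g⁻¹ * (s * s') * g)}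

/-- The set of adjacent transpositions (Coxeter generators) in `Σ_n`. -/
def coxeterGens (n : ℕ) : Set (Equiv.Perm (Fin n)) :=
  {σ | ∃ i j : Fin n, (j : ℕ) = (i : ℕ) + 1 ∧ σ = Equiv.swap i j}

/-!
Upper bound: a conjugate of a product of two adjacent transpositions is a product of two
transpositions, and the transposition `(a b)` with `a < b` is a product of `2 (b - a) - 1 ≤ 2n - 3`
adjacent ones. Lower bound: multiplying by an adjacent transposition changes the number of
inversions by at most one, so word length dominates the inversion count; and `(0 m)(1 2)` with
`m = n - 1`, a conjugate of `(0 1)(2 3)`, has `(n - 1) + (n - 2) + 1 = 2n - 2` inversions.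
-/

open Equiv Finset

section WordLength

variable {G : Type*} [Group G] {S : Set G}

theorem wordLen_prod_le_length {l : List G} (hl : ∀ x ∈ l, x ∈ S) :
    wordLen S l.prod ≤ l.length :=
  Nat.sInf_le ⟨l, hl, rfl, rfl⟩

theorem le_wordLen {f : G → ℕ} (hf : ∀ l : List G, (∀ x ∈ l, x ∈ S) → f l.prod ≤ l.length)
    {g : G} (hg : ∃ l : List G, (∀ x ∈ l, x ∈ S) ∧ l.prod = g) : f g ≤ wordLen S g := by
  obtain ⟨l₀, hl₀, hprod₀⟩ := hg
  have hmem : wordLen S g ∈ {k | ∃ l : List G, (∀ x ∈ l, x ∈ S) ∧ l.length = k ∧ l.prod = g} :=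
    Nat.sInf_mem ⟨l₀.length, l₀, hl₀, rfl, hprod₀⟩
  obtain ⟨l, hl, hlen, rfl⟩ := hmem
  exact hlen ▸ hf l hl

theorem lam2_le {N : ℕ} (hS : S.Nonempty)
    (h : ∀ g : G, ∀ s ∈ S, ∀ s' ∈ S, wordLen S (g⁻¹ * (s * s') * g) ≤ N) : lam2 S ≤ N := by
  obtain ⟨s, hs⟩ := hS
  refine csSup_le ⟨_, 1, s, hs, s, hs, rfl⟩ ?_
  rintro _ ⟨g, s, hs, s', hs', rfl⟩
  exact h g s hs s' hs'

theorem wordLen_conj_mul_le_lam2 {N : ℕ}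
    (h : ∀ g : G, ∀ s ∈ S, ∀ s' ∈ S, wordLen S (g⁻¹ * (s * s') * g) ≤ N)
    (g : G) {s s' : G} (hs : s ∈ S) (hs' : s' ∈ S) :
    wordLen S (g⁻¹ * (s * s') * g) ≤ lam2 S := by
  refine le_csSup ⟨N, ?_⟩ ⟨g, s, hs, s', hs', rfl⟩
  rintro _ ⟨g, s, hs, s', hs', rfl⟩
  exact h g s hs s' hs'

end WordLength

theorem isConj_swap_mul_swap_of_nodup {α : Type*} [Fintype α] [DecidableEq α]
    {x y z t x' y' z' t' : α} (h : [x, y, z, t].Nodup) (h' : [x', y', z', t'].Nodup) :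
    IsConj (swap x y * swap z t) (swap x' y' * swap z' t') := by
  rw [Perm.isConj_iff_cycleType_eq, Perm.cycleType_swap_mul_swap_of_nodup h,
    Perm.cycleType_swap_mul_swap_of_nodup h']

namespace Coxeter

variable {n : ℕ}

theorem swap_mem_coxeterGens {i j : Fin n} (hij : (j : ℕ) = i + 1) :
    swap i j ∈ coxeterGens n :=
  ⟨i, j, hij, rfl⟩

theorem exists_word_swap_of_val_eq_add (a : Fin n) : ∀ (d : ℕ) (b : Fin n), (b : ℕ) = a + d + 1 →
    ∃ l : List (Perm (Fin n)),
      (∀ x ∈ l, x ∈ coxeterGens n) ∧ l.length = 2 * d + 1 ∧ l.prod = swap a b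
  | 0, b, hb => ⟨[swap a b], by simpa using swap_mem_coxeterGens hb, rfl, by simp⟩
  | d + 1, b, hb => by
    let c : Fin n := ⟨a + d + 1, by omega⟩
    obtain ⟨l, hl, hlen, hprod⟩ := exists_word_swap_of_val_eq_add a d c rfl
    have hcb : swap c b ∈ coxeterGens n := swap_mem_coxeterGens (by simp only [c]; omega)
    refine ⟨swap c b :: l ++ [swap c b], ?_, by
      simp only [List.length_cons, List.length_append, List.length_nil, hlen]; omega, ?_⟩
    · simp only [List.cons_append, List.forall_mem_cons, List.forall_mem_append]
      exact ⟨hcb, hl, hcb, by simp⟩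
    · have hac : a ≠ c := Fin.ne_of_val_ne (by simp only [c]; omega)
      have hab : a ≠ b := Fin.ne_of_val_ne (by omega)
      rw [List.cons_append, List.prod_cons, List.prod_append, hprod, List.prod_singleton,
        ← mul_assoc, swap_mul_swap_mul_swap hac hab, swap_comm]

theorem exists_word_swap {a b : Fin n} (hab : a ≠ b) :
    ∃ l : List (Perm (Fin n)),
      (∀ x ∈ l, x ∈ coxeterGens n) ∧ l.length ≤ 2 * n - 3 ∧ l.prod = swap a b := by
  rcases hab.lt_or_gt with hlt | hlt
  · obtain ⟨l, hl, hlen, hprod⟩ := exists_word_swap_of_val_eq_add a (b - a - 1) b (by omega)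
    exact ⟨l, hl, by omega, hprod⟩
  · obtain ⟨l, hl, hlen, hprod⟩ := exists_word_swap_of_val_eq_add b (a - b - 1) a (by omega)
    exact ⟨l, hl, by omega, hprod.trans (swap_comm b a)⟩

theorem exists_word_conj_mul (g : Perm (Fin n)) {s s' : Perm (Fin n)} (hs : s ∈ coxeterGens n)
    (hs' : s' ∈ coxeterGens n) :
    ∃ l : List (Perm (Fin n)),
      (∀ x ∈ l, x ∈ coxeterGens n) ∧ l.length ≤ 4 * n - 6 ∧ l.prod = g⁻¹ * (s * s') * g := by
  obtain ⟨i, j, hij, rfl⟩ := hs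
  obtain ⟨i', j', hij', rfl⟩ := hs'
  have hconj : g⁻¹ * (swap i j * swap i' j') * g
      = swap (g⁻¹ i) (g⁻¹ j) * swap (g⁻¹ i') (g⁻¹ j') := by
    rw [swap_apply_apply, swap_apply_apply, inv_inv]; group
  obtain ⟨l₁, hl₁, hlen₁, hprod₁⟩ :=
    exists_word_swap (g⁻¹.injective.ne (Fin.ne_of_val_ne (by omega)) : g⁻¹ i ≠ g⁻¹ j)
  obtain ⟨l₂, hl₂, hlen₂, hprod₂⟩ :=
    exists_word_swap (g⁻¹.injective.ne (Fin.ne_of_val_ne (by omega)) : g⁻¹ i' ≠ g⁻¹ j')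
  refine ⟨l₁ ++ l₂, ?_, by rw [List.length_append]; omega, by
    rw [List.prod_append, hprod₁, hprod₂, hconj]⟩
  simp only [List.mem_append]
  rintro x (hx | hx)
  exacts [hl₁ x hx, hl₂ x hx]

theorem wordLen_conj_mul_le (g : Perm (Fin n)) {s s' : Perm (Fin n)}
    (hs : s ∈ coxeterGens n) (hs' : s' ∈ coxeterGens n) :
    wordLen (coxeterGens n) (g⁻¹ * (s * s') * g) ≤ 4 * n - 6 := by
  obtain ⟨l, hl, hlen, hprod⟩ := exists_word_conj_mul g hs hs'
  exact hprod ▸ (wordLen_prod_le_length hl).trans hlen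

theorem lam2_coxeterGens_le (hn : 2 ≤ n) : lam2 (coxeterGens n) ≤ 4 * n - 6 :=
  lam2_le ⟨_, swap_mem_coxeterGens (i := ⟨0, by omega⟩) (j := ⟨1, hn⟩) rfl⟩
    fun g _ hs _ hs' => wordLen_conj_mul_le g hs hs'

def inversions (σ : Perm (Fin n)) : Finset (Fin n × Fin n) :=
  {p | p.1 < p.2 ∧ σ p.2 < σ p.1}

theorem mem_inversions {σ : Perm (Fin n)} {p : Fin n × Fin n} :
    p ∈ inversions σ ↔ p.1 < p.2 ∧ σ p.2 < σ p.1 := by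
  simp [inversions]

theorem eq_and_eq_of_swap_lt_swap {i j x y : Fin n} (hij : (j : ℕ) = i + 1) (hxy : x < y)
    (h : swap i j y < swap i j x) : x = i ∧ y = j := by
  rw [swap_apply_def, swap_apply_def] at h
  simp only [Fin.ext_iff, Fin.lt_def] at *
  split_ifs at h <;> simp_all <;> omega

theorem card_inversions_swap_mul_le {i j : Fin n} (hij : (j : ℕ) = i + 1) (σ : Perm (Fin n)) :
    #(inversions (swap i j * σ)) ≤ #(inversions σ) + 1 := by
  refine (card_le_card (t := insert (σ⁻¹ i, σ⁻¹ j) (inversions σ)) ?_).trans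
    (card_insert_le _ _)
  rintro ⟨x, y⟩ hp
  rw [mem_inversions, Perm.mul_apply, Perm.mul_apply] at hp
  rw [mem_insert, mem_inversions]
  rcases lt_or_gt_of_ne (σ.injective.ne hp.1.ne') with hσ | hσ
  · exact Or.inr ⟨hp.1, hσ⟩
  · obtain ⟨rfl, rfl⟩ := eq_and_eq_of_swap_lt_swap hij hσ hp.2
    simp

theorem card_inversions_prod_le :
    ∀ l : List (Perm (Fin n)), (∀ x ∈ l, x ∈ coxeterGens n) → #(inversions l.prod) ≤ l.length
  | [], _ => by
    simp only [List.prod_nil, List.length_nil, nonpos_iff_eq_zero, card_eq_zero,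
      eq_empty_iff_forall_notMem, mem_inversions, Perm.one_apply]
    exact fun p hp => lt_asymm hp.1 hp.2
  | s :: l, hl => by
    obtain ⟨i, j, hij, rfl⟩ := hl s List.mem_cons_self
    rw [List.prod_cons, List.length_cons]
    exact (card_inversions_swap_mul_le hij _).trans
      (Nat.add_le_add_right (card_inversions_prod_le l fun x hx => hl x (.tail _ hx)) 1)

theorem card_inversions_le_wordLen {σ : Perm (Fin n)}
    (hσ : ∃ l : List (Perm (Fin n)), (∀ x ∈ l, x ∈ coxeterGens n) ∧ l.prod = σ) :
    #(inversions σ) ≤ wordLen (coxeterGens n) σ :=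
  le_wordLen (f := fun σ => #(inversions σ)) card_inversions_prod_le hσ

theorem two_mul_sub_two_le_card_inversions {σ : Perm (Fin n)} {a b : Fin n} (ha : IsBot a)
    (hb : IsTop b) (hσa : σ a = b) (hσb : σ b = a) {p : Fin n × Fin n}
    (hp : p ∈ inversions σ) (hpa : p.1 ≠ a) (hpb : p.2 ≠ b) :
    2 * n - 2 ≤ #(inversions σ) := by
  have hab : a ≠ b := (((ha p.1).lt_of_ne hpa.symm).trans_le (hb p.1)).ne
  set A := (univ.erase a).map (Function.Embedding.sectR a (Fin n))
  set B := ((univ.erase b).erase a).map (Function.Embedding.sectL (Fin n) b)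
  have hA : A ⊆ inversions σ := by
    simp only [A, subset_iff, mem_map, mem_erase, mem_univ, and_true, mem_inversions]
    rintro _ ⟨y, hy, rfl⟩
    refine ⟨(ha y).lt_of_ne (Ne.symm hy), hσa ▸ (hb _).lt_of_ne ?_⟩
    rw [← hσa]
    exact σ.injective.ne hy
  have hB : B ⊆ inversions σ := by
    simp only [B, subset_iff, mem_map, mem_erase, mem_univ, and_true, mem_inversions]
    rintro _ ⟨x, ⟨hxa, hxb⟩, rfl⟩
    refine ⟨(hb x).lt_of_ne hxb, hσb ▸ (ha _).lt_of_ne ?_⟩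
    rw [← hσb]
    exact σ.injective.ne (Ne.symm hxb)
  have hAB : Disjoint A B := by
    simp only [A, B, disjoint_left, mem_map, mem_erase, mem_univ, and_true]
    rintro _ ⟨y, -, rfl⟩ ⟨x, ⟨hxa, -⟩, hx⟩
    exact hxa (congrArg Prod.fst hx)
  have hpAB : p ∉ A ∪ B := by
    simp only [A, B, mem_union, mem_map, not_or]
    exact ⟨fun ⟨_, _, h⟩ => hpa (congrArg Prod.fst h).symm,
      fun ⟨_, _, h⟩ => hpb (congrArg Prod.snd h).symm⟩
  have hcardA : #A = n - 1 := by simp [A]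
  have hcardB : #B = n - 2 := by
    rw [card_map, card_erase_of_mem (mem_erase.2 ⟨hab, mem_univ a⟩), card_erase_of_mem (mem_univ b),
      card_univ, Fintype.card_fin]
    omega
  calc 2 * n - 2 = #A + #B + 1 := by omega
    _ = #(insert p (A ∪ B)) := by rw [card_insert_of_notMem hpAB, card_union_of_disjoint hAB]
    _ ≤ #(inversions σ) := card_le_card (insert_subset hp (union_subset hA hB))

theorem two_mul_sub_two_le_lam2 (hn : 4 ≤ n) : 2 * n - 2 ≤ lam2 (coxeterGens n) := by
  let x₀ : Fin n := ⟨0, by omega⟩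
  let x₁ : Fin n := ⟨1, by omega⟩
  let x₂ : Fin n := ⟨2, by omega⟩
  let x₃ : Fin n := ⟨3, by omega⟩
  let xₗ : Fin n := ⟨n - 1, by omega⟩
  set σ := swap x₀ xₗ * swap x₁ x₂
  obtain ⟨c, hc⟩ := isConj_iff.1 <| isConj_swap_mul_swap_of_nodup
    (x := x₀) (y := x₁) (z := x₂) (t := x₃) (x' := x₀) (y' := xₗ) (z' := x₁) (t' := x₂)
    (by simp [x₀, x₁, x₂, x₃, Fin.ext_iff]) (by
      simp only [List.nodup_cons, List.mem_cons, List.not_mem_nil, or_false, not_false_eq_true,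
        List.nodup_nil, and_true, Fin.ext_iff, x₀, x₁, x₂, xₗ]
      omega)
  have hσ : σ = c⁻¹⁻¹ * (swap x₀ x₁ * swap x₂ x₃) * c⁻¹ := by rw [inv_inv, hc]
  have hs : swap x₀ x₁ ∈ coxeterGens n := swap_mem_coxeterGens rfl
  have hs' : swap x₂ x₃ ∈ coxeterGens n := swap_mem_coxeterGens rfl
  have h₀₁ : x₀ ≠ x₁ := Fin.ne_of_val_ne (by simp [x₀, x₁])
  have h₀₂ : x₀ ≠ x₂ := Fin.ne_of_val_ne (by simp [x₀, x₂])
  have h₁ₗ : x₁ ≠ xₗ := Fin.ne_of_val_ne (by simp only [x₁, xₗ]; omega)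
  have h₂ₗ : x₂ ≠ xₗ := Fin.ne_of_val_ne (by simp only [x₂, xₗ]; omega)
  have hinv : 2 * n - 2 ≤ #(inversions σ) := by
    refine two_mul_sub_two_le_card_inversions (a := x₀) (b := xₗ) (p := (x₁, x₂))
      (fun _ => Fin.le_def.2 (Nat.zero_le _)) (fun y => Fin.le_def.2 (by simp only [xₗ]; omega))
      ?_ ?_ ?_ h₀₁.symm h₂ₗ
    · simp [σ, swap_apply_of_ne_of_ne h₀₁ h₀₂]
    · simp [σ, swap_apply_of_ne_of_ne h₁ₗ.symm h₂ₗ.symm]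
    · simp [σ, mem_inversions, swap_apply_of_ne_of_ne h₀₁.symm h₁ₗ,
        swap_apply_of_ne_of_ne h₀₂.symm h₂ₗ, x₁, x₂, Fin.lt_def]
  calc 2 * n - 2 ≤ #(inversions σ) := hinv
    _ ≤ wordLen (coxeterGens n) σ := by
      obtain ⟨l, hl, -, hprod⟩ := exists_word_conj_mul c⁻¹ hs hs'
      exact card_inversions_le_wordLen ⟨l, hl, hprod.trans hσ.symm⟩
    _ ≤ lam2 (coxeterGens n) := hσ ▸ wordLen_conj_mul_le_lam2
      (fun g _ hs _ hs' => wordLen_conj_mul_le g hs hs') c⁻¹ hs hs'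

end Coxeter

/-- for `n ≥ 7`, `2n − 2 ≤ λ₂(Σ_n, C_n) ≤ 4n − 6`. -/
theorem stmt_15 (n : ℕ) (hn : 7 ≤ n) :
    2 * n - 2 ≤ lam2 (coxeterGens n) ∧ lam2 (coxeterGens n) ≤ 4 * n - 6 :=
  ⟨Coxeter.two_mul_sub_two_le_lam2 (by omega), Coxeter.lam2_coxeterGens_le (by omega)⟩
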